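/- For any well-founded extensional APG X with carrier in Type u, there exists a well-founded extensional APG P with carrier in Type u such that for every well-founded extensional APG W with carrier in Type u, W ⋲ P holds if and only if every member of W is a member of X, i.e. for every well-founded extensional APG V with carrier in Type u, V ⋲ W implies V ⋲ X. (The power set axiom holds in the class of well-founded extensional APGs; this is the instance over the topos of types/sets.) -/

import Mathlib

universe u

/-- An accessible pointed graph (APG): a type with a binary relation and a root from
which every node is reachable (backwards along `Relation.ReflTransGen`). -/
structure APG : Type (u + 1) where
  carrier : Type u
  rel : carrier → carrier → Prop
  pt : carrier
  acc : ∀ z : carrier, Relation.ReflTransGen rel z pt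

/-- An APG is well-founded if its relation is. -/
def APG.WF (X : APG.{u}) : Prop := WellFounded X.rel

/-- An APG is extensional if its relation is. -/
def APG.Ext (X : APG.{u}) : Prop :=
  ∀ x y : X.carrier, (∀ z, X.rel z x ↔ X.rel z y) → x = y

/-- Isomorphism of APGs: a relation isomorphism preserving the root. -/
def APG.Iso (X Y : APG.{u}) : Prop :=
  ∃ e : X.rel ≃r Y.rel, e X.pt = Y.pt

private theorem APG.slice_acc {α : Type u} (r : α → α → Prop) (y : α)
    (z : {w : α // Relation.ReflTransGen r w y}) :
    Relation.ReflTransGen (fun a b : {w : α // Relation.ReflTransGen r w y} => r a.1 b.1)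
      z ⟨y, Relation.ReflTransGen.refl⟩ := by
  obtain ⟨a, h⟩ := z
  induction h using Relation.ReflTransGen.head_induction_on with
  | refl => exact Relation.ReflTransGen.refl
  | head h' h ih => exact Relation.ReflTransGen.head h' ih

/-- The sub-APG of `Y` determined by a node `y`: the nodes admitting a path to `y`,
rooted at `y`. -/
def APG.slice (Y : APG.{u}) (y : Y.carrier) : APG.{u} where
  carrier := {z : Y.carrier // Relation.ReflTransGen Y.rel z y}
  rel a b := Y.rel a.1 b.1
  pt := ⟨y, Relation.ReflTransGen.refl⟩
  acc z := APG.slice_acc Y.rel y z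

/-- Membership of APGs: `X ⋲ Y` iff `X` is isomorphic to `Y.slice y` for some member
(child of the root) `y` of `Y`. -/
def APG.Mem (X Y : APG.{u}) : Prop :=
  ∃ y : Y.carrier, Y.rel y Y.pt ∧ APG.Iso X (Y.slice y)

/-!
The power APG of `X` has a fresh root whose children are of two kinds: each node `w` of `X`
all of whose children are members of `X` (with everything below `w`), and, for each set `S` of
members of `X` that is not the set of children of a node of `X`, a new node whose children are
the nodes in `S`. Skipping the sets already realised in `X` keeps the graph extensional.

If every member of a well-founded extensional `W` is a member of `X`, then `W` is isomorphic to
the slice at the child realising the members of `X` isomorphic to members of `W`, because two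
well-founded extensional APGs with the same members up to isomorphism are isomorphic. That
isomorphism matches root with root and other nodes with isomorphic slices; it is a bijection
because distinct nodes of a well-founded extensional APG have non-isomorphic slices.
-/

namespace APG

open Relation

def children (X : APG.{u}) (x : X.carrier) : Set X.carrier := {z | X.rel z x}

def members (X : APG.{u}) : Set X.carrier := X.children X.pt

theorem Iso.refl (X : APG.{u}) : Iso X X := ⟨RelIso.refl _, rfl⟩

theorem Iso.symm {X Y : APG.{u}} (h : Iso X Y) : Iso Y X := by
  obtain ⟨e, he⟩ := h
  exact ⟨e.symm, by rw [← he, e.symm_apply_apply]⟩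

theorem Iso.trans {X Y Z : APG.{u}} (h : Iso X Y) (h' : Iso Y Z) : Iso X Z := by
  obtain ⟨e, he⟩ := h
  obtain ⟨e', he'⟩ := h'
  exact ⟨e.trans e', by simp [he, he']⟩

theorem WF.slice {Y : APG.{u}} (hY : Y.WF) (y : Y.carrier) : (Y.slice y).WF :=
  InvImage.wf Subtype.val hY

theorem Ext.slice {Y : APG.{u}} (hY : Y.Ext) (y : Y.carrier) : (Y.slice y).Ext := by
  rintro ⟨a, ha⟩ ⟨b, hb⟩ h
  refine Subtype.ext (hY a b fun z => ⟨fun hz => ?_, fun hz => ?_⟩)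
  · exact (h ⟨z, .head hz ha⟩).1 hz
  · exact (h ⟨z, .head hz hb⟩).2 hz

theorem WF.ne_pt_of_rel {X : APG.{u}} (hX : X.WF) {x y : X.carrier} (h : X.rel x y) :
    x ≠ X.pt := by
  rintro rfl
  exact hX.transGen.irrefl.irrefl _ (TransGen.head' h (X.acc y))

theorem iso_slice_of_relEmbedding {X Y : APG.{u}} (f : X.rel ↪r Y.rel)
    (hf : ∀ z y, Y.rel z (f y) → z ∈ Set.range f) (x : X.carrier) :
    Iso (X.slice x) (Y.slice (f x)) := by
  have lift_path : ∀ z, ReflTransGen Y.rel z (f x) → ∃ a, ReflTransGen X.rel a x ∧ f a = z := by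
    intro z hz
    induction hz using ReflTransGen.head_induction_on with
    | refl => exact ⟨x, .refl, rfl⟩
    | head hzw _ ih =>
      obtain ⟨a, ha, rfl⟩ := ih
      obtain ⟨b, rfl⟩ := hf _ _ hzw
      exact ⟨b, .head (f.map_rel_iff.1 hzw) ha, rfl⟩
  let g : (X.slice x).carrier → (Y.slice (f x)).carrier :=
    fun a => ⟨f a.1, a.2.lift f fun _ _ => f.map_rel_iff.2⟩
  have hg : Function.Bijective g := by
    refine ⟨fun a b hab => Subtype.ext (f.injective (congrArg Subtype.val hab)), fun z => ?_⟩
    obtain ⟨a, ha, hz⟩ := lift_path z.1 z.2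
    exact ⟨⟨a, ha⟩, Subtype.ext hz⟩
  exact ⟨⟨Equiv.ofBijective g hg, f.map_rel_iff⟩, rfl⟩

theorem iso_slice_of_relIso {Y Z : APG.{u}} (e : Y.rel ≃r Z.rel) (y : Y.carrier) :
    Iso (Y.slice y) (Z.slice (e y)) :=
  iso_slice_of_relEmbedding e.toRelEmbedding (fun z _ _ => ⟨e.symm z, e.apply_symm_apply z⟩) y

theorem slice_slice_iso (Y : APG.{u}) (y : Y.carrier) (w : (Y.slice y).carrier) :
    Iso ((Y.slice y).slice w) (Y.slice w.1) :=
  iso_slice_of_relEmbedding ⟨⟨Subtype.val, Subtype.val_injective⟩, Iff.rfl⟩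
    (fun z (w : (Y.slice y).carrier) hz => ⟨⟨z, .head hz w.2⟩, rfl⟩) w

theorem Mem.of_iso {V W Z : APG.{u}} (hV : Mem V W) (h : Iso W Z) : Mem V Z := by
  obtain ⟨m, hm, hVm⟩ := hV
  obtain ⟨e, he⟩ := h
  exact ⟨e m, he ▸ e.map_rel_iff.2 hm, hVm.trans (iso_slice_of_relIso e m)⟩

theorem mem_slice_iff {V Y : APG.{u}} {y : Y.carrier} :
    Mem V (Y.slice y) ↔ ∃ z, Y.rel z y ∧ Iso V (Y.slice z) := by
  constructor
  · rintro ⟨w, hw, hV⟩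
    exact ⟨w.1, hw, hV.trans (slice_slice_iso Y y w)⟩
  · rintro ⟨z, hz, hV⟩
    exact ⟨⟨z, .single hz⟩, hz, hV.trans (slice_slice_iso Y y ⟨z, .single hz⟩).symm⟩

theorem Iso.exists_rel_slice {A B : APG.{u}} {a a' : A.carrier} {b : B.carrier}
    (h : Iso (A.slice a) (B.slice b)) (ha : A.rel a' a) :
    ∃ b', B.rel b' b ∧ Iso (A.slice a') (B.slice b') :=
  mem_slice_iff.1 ((mem_slice_iff.2 ⟨a', ha, .refl _⟩).of_iso h)

theorem eq_of_iso_slice {Y : APG.{u}} (hw : Y.WF) (he : Y.Ext) {b b' : Y.carrier}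
    (h : Iso (Y.slice b) (Y.slice b')) : b = b' := by
  induction b using WellFounded.induction hw generalizing b' with
  | _ b ih =>
  refine he b b' fun c => ⟨fun hc => ?_, fun hc => ?_⟩
  · obtain ⟨c', hc', hcc'⟩ := h.exists_rel_slice hc
    rwa [ih c hc hcc']
  · obtain ⟨c', hc', hcc'⟩ := h.symm.exists_rel_slice hc
    rwa [← ih c' hc' hcc'.symm]

section Extensionality

variable {A B : APG.{u}}

/-- The graph of the isomorphism built in `iso_of_forall_mem_iff`; rigidity makes it functional
and injective. -/
def Corr (A B : APG.{u}) (a : A.carrier) (b : B.carrier) : Prop :=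
  (a = A.pt ∧ b = B.pt) ∨ (a ≠ A.pt ∧ b ≠ B.pt ∧ Iso (A.slice a) (B.slice b))

theorem Corr.symm {a : A.carrier} {b : B.carrier} (h : Corr A B a b) : Corr B A b a := by
  rcases h with ⟨ha, hb⟩ | ⟨ha, hb, hab⟩
  · exact .inl ⟨hb, ha⟩
  · exact .inr ⟨hb, ha, hab.symm⟩

theorem Corr.unique (hB : B.WF) (hBe : B.Ext) {a : A.carrier} {b b' : B.carrier}
    (h : Corr A B a b) (h' : Corr A B a b') : b = b' := by
  rcases h with ⟨ha, hb⟩ | ⟨ha, -, hab⟩ <;> rcases h' with ⟨ha', hb'⟩ | ⟨ha', -, hab'⟩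
  · rw [hb, hb']
  · exact absurd ha ha'
  · exact absurd ha' ha
  · exact eq_of_iso_slice hB hBe (hab.symm.trans hab')

theorem Corr.exists_rel (hA : A.WF) (hB : B.WF) (hAB : ∀ m ∈ A.members, Mem (A.slice m) B)
    {a a' : A.carrier} {b : B.carrier} (h : Corr A B a b) (ha : A.rel a' a) :
    ∃ b', B.rel b' b ∧ Corr A B a' b' := by
  obtain ⟨b', hb', hab'⟩ : ∃ b', B.rel b' b ∧ Iso (A.slice a') (B.slice b') := by
    rcases h with ⟨rfl, rfl⟩ | ⟨-, -, hab⟩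
    · exact hAB a' ha
    · exact hab.exists_rel_slice ha
  exact ⟨b', hb', .inr ⟨hA.ne_pt_of_rel ha, hB.ne_pt_of_rel hb', hab'⟩⟩

theorem exists_corr (hA : A.WF) (hB : B.WF) (hAB : ∀ m ∈ A.members, Mem (A.slice m) B)
    (a : A.carrier) : ∃ b, Corr A B a b := by
  induction A.acc a using ReflTransGen.head_induction_on with
  | refl => exact ⟨B.pt, .inl ⟨rfl, rfl⟩⟩
  | head ha _ ih =>
    obtain ⟨b, hb⟩ := ih
    obtain ⟨b', -, hb'⟩ := hb.exists_rel hA hB hAB ha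
    exact ⟨b', hb'⟩

theorem iso_of_forall_mem_iff (hA : A.WF) (hAe : A.Ext) (hB : B.WF) (hBe : B.Ext)
    (h : ∀ V : APG.{u}, V.WF → V.Ext → (Mem V A ↔ Mem V B)) : Iso A B := by
  have hAB : ∀ m ∈ A.members, Mem (A.slice m) B := fun m hm =>
    (h _ (hA.slice m) (hAe.slice m)).1 ⟨m, hm, .refl _⟩
  have hBA : ∀ n ∈ B.members, Mem (B.slice n) A := fun n hn =>
    (h _ (hB.slice n) (hBe.slice n)).2 ⟨n, hn, .refl _⟩
  choose f hf using exists_corr hA hB hAB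
  have f_inj : Function.Injective f := fun a a' haa' =>
    Corr.unique hA hAe (hf a).symm (haa' ▸ (hf a').symm)
  have f_surj : Function.Surjective f := fun b => by
    obtain ⟨a, ha⟩ := exists_corr hB hA hBA b
    exact ⟨a, Corr.unique hB hBe (hf a) ha.symm⟩
  refine ⟨⟨Equiv.ofBijective f ⟨f_inj, f_surj⟩, fun {a a'} => ⟨fun hf' => ?_, fun ha => ?_⟩⟩,
    Corr.unique hB hBe (hf A.pt) (.inl ⟨rfl, rfl⟩)⟩
  · obtain ⟨a'', ha'', hfa⟩ := (hf a').symm.exists_rel hB hA hBA hf'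
    rwa [Corr.unique hA hAe (hf a).symm hfa]
  · obtain ⟨b, hb, hab⟩ := (hf a').exists_rel hA hB hAB ha
    show B.rel (f a) (f a')
    rwa [Corr.unique hB hBe (hf a) hab]

end Extensionality

section Powerset

variable {X : APG.{u}}

inductive PowersetNode (X : APG.{u}) : Type u
  | root
  | new (S : Set X.carrier) (hS : S ⊆ X.members) (hnew : S ∉ Set.range X.children)
  | old (x : X.carrier)

namespace PowersetNode

/-- The nodes `x` of `X` such that `old x` is a child. -/
def elems : PowersetNode X → Set X.carrier
  | root => {c | X.children c ⊆ X.members}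
  | new S _ _ => S
  | old w => X.children w

def Rel : PowersetNode X → PowersetNode X → Prop
  | root, _ => False
  | new .., y => y = root
  | old x, y => x ∈ y.elems

theorem pt_mem_elems_iff (hX : X.WF) {y : PowersetNode X} : X.pt ∈ y.elems ↔ y = root := by
  refine ⟨fun h => ?_, by rintro rfl; exact fun _ h => h⟩
  cases y with
  | root => rfl
  | new S hS _ => exact absurd rfl (hX.ne_pt_of_rel (hS h))
  | old w => exact absurd rfl (hX.ne_pt_of_rel h)

theorem elems_injective (hX : X.WF) (hXe : X.Ext) :
    Function.Injective (elems : PowersetNode X → Set X.carrier) := by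
  intro y y' h
  have hroot : y = root ↔ y' = root := by rw [← pt_mem_elems_iff hX, h, pt_mem_elems_iff hX]
  cases y with
  | root => exact (hroot.1 rfl).symm
  | new S _ hnew =>
    cases y' with
    | root => exact hroot.2 rfl
    | new S' _ _ => cases (h : S = S'); rfl
    | old w' => exact absurd ⟨w', h.symm⟩ hnew
  | old w =>
    cases y' with
    | root => exact hroot.2 rfl
    | new S' _ hnew' => exact absurd ⟨w, h⟩ hnew'
    | old w' => exact congrArg old (hXe w w' (Set.ext_iff.1 h))

end PowersetNode

open PowersetNode

abbrev powerset (X : APG.{u}) : APG.{u} where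
  carrier := PowersetNode X
  rel := PowersetNode.Rel
  pt := root
  acc
    | root => .refl
    | new _ _ _ => .single rfl
    | old x => .tail ((X.acc x).lift old fun _ _ h => h) fun _ h => h

theorem powerset_wf (hX : X.WF) : (powerset X).WF := by
  have acc_old : ∀ x, Acc Rel (old x : PowersetNode X) := fun x => by
    induction x using WellFounded.induction hX with
    | _ x ih =>
    refine ⟨_, fun z hz => ?_⟩
    cases z with
    | root => exact hz.elim
    | new _ _ _ => cases hz
    | old a => exact ih a hz
  have acc_new : ∀ S hS hnew, Acc Rel (new S hS hnew : PowersetNode X) := fun S hS hnew => by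
    refine ⟨_, fun z hz => ?_⟩
    cases z with
    | root => exact hz.elim
    | new _ _ _ => cases hz
    | old a => exact acc_old a
  refine ⟨fun y => ⟨_, fun z _ => ?_⟩⟩
  cases z with
  | root => contradiction
  | new S hS hnew => exact acc_new S hS hnew
  | old a => exact acc_old a

theorem powerset_ext (hX : X.WF) (hXe : X.Ext) : (powerset X).Ext := fun _ _ h =>
  elems_injective hX hXe (Set.ext fun c => h (old c))

theorem iso_slice_old (x : X.carrier) : Iso (X.slice x) ((powerset X).slice (old x)) :=
  iso_slice_of_relEmbedding (Y := powerset X) ⟨⟨old, fun _ _ => old.inj⟩, Iff.rfl⟩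
    (fun z _ hz => by
      cases z with
      | root => exact hz.elim
      | new _ _ _ => cases hz
      | old a => exact ⟨a, rfl⟩) x

theorem mem_slice_powerset_iff {V : APG.{u}} {y : PowersetNode X}
    (hy : (powerset X).rel y (powerset X).pt) :
    Mem V ((powerset X).slice y) ↔ ∃ c ∈ y.elems, Iso V (X.slice c) := by
  rw [mem_slice_iff]
  constructor
  · rintro ⟨z, hz, hV⟩
    cases z with
    | root => exact hz.elim
    | new _ _ _ => exact (hz ▸ hy).elim
    | old c => exact ⟨c, hz, hV.trans (iso_slice_old c).symm⟩
  · rintro ⟨c, hc, hV⟩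
    exact ⟨old c, hc, hV.trans (iso_slice_old c)⟩

theorem elems_subset_members {y : PowersetNode X} (hy : (powerset X).rel y (powerset X).pt) :
    y.elems ⊆ X.members := by
  cases y with
  | root => exact hy.elim
  | new S hS _ => exact hS
  | old w => exact hy

theorem exists_mem_powerset_elems_eq {S : Set X.carrier} (hS : S ⊆ X.members) :
    ∃ y : PowersetNode X, (powerset X).rel y (powerset X).pt ∧ y.elems = S := by
  by_cases hnew : S ∈ Set.range X.children
  · obtain ⟨w, rfl⟩ := hnew
    exact ⟨old w, hS, rfl⟩
  · exact ⟨new S hS hnew, rfl, rfl⟩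

end Powerset

end APG

/-- Power set for well-founded extensional APGs. -/
theorem apg_powerset (X : APG.{u}) (hXw : X.WF) (hXe : X.Ext) :
    ∃ P : APG.{u}, P.WF ∧ P.Ext ∧
      ∀ W : APG.{u}, W.WF → W.Ext →
        (APG.Mem W P ↔
          ∀ V : APG.{u}, V.WF → V.Ext → APG.Mem V W → APG.Mem V X) := by
  open APG in
  refine ⟨powerset X, powerset_wf hXw, powerset_ext hXw hXe, fun W hW hWe => ⟨?_, fun hWX => ?_⟩⟩
  · rintro ⟨y, hy, hWy⟩ V - - hVW
    obtain ⟨c, hc, hVc⟩ := (mem_slice_powerset_iff hy).1 (hVW.of_iso hWy)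
    exact ⟨c, elems_subset_members hy hc, hVc⟩
  · obtain ⟨y, hy, hS⟩ := exists_mem_powerset_elems_eq
      (S := {c ∈ X.members | ∃ m ∈ W.members, Iso (W.slice m) (X.slice c)}) fun _ hc => hc.1
    refine ⟨y, hy, iso_of_forall_mem_iff hW hWe ((powerset_wf hXw).slice y)
      ((powerset_ext hXw hXe).slice y) fun V _ _ => ?_⟩
    rw [mem_slice_powerset_iff hy, hS]
    constructor
    · rintro ⟨m, hm, hVm⟩
      obtain ⟨c, hc, hmc⟩ := hWX _ (hW.slice m) (hWe.slice m) ⟨m, hm, .refl _⟩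
      exact ⟨c, ⟨hc, m, hm, hmc⟩, hVm.trans hmc⟩
    · rintro ⟨c, ⟨-, m, hm, hmc⟩, hVc⟩
      exact ⟨m, hm, hVc.trans hmc.symm⟩
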